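/- arXiv:2308.14085 — 2 statements merged into one kernel-verified Lean document; each statement's English description precedes it below -/
import Mathlib

section
/- Suppose P₀ has compact support in ℝ^N. For the interpolant y(t) = α(t)x₀ + β(t)z with β(t) > 0, the velocity field b(y,t) = E[∂_t y(t)|y(t)=y] is differentiable in y with Jacobian ∂b(y,t)/∂y = (α(t)/β(t)²)( α̇(t) − β̇(t)α(t)/β(t) ) Cov[P_{t,y}] + (β̇(t)/β(t)) I_N, where Cov[P_{t,y}] is the covariance matrix of the tilted posterior measure P(x | y(t)=y). -/
open MeasureTheory ProbabilityTheory

noncomputable section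

/-- Euclidean dot product on `ℝ^N`. -/
def dotp {N : ℕ} (x y : Fin N → ℝ) : ℝ := ∑ i, x i * y i

/-- Unnormalized density of the tilted measure at observation `y`:
`exp((α/β²)⟨y,x⟩ − (α²/(2β²))‖x‖²)`, with `a = α(t)`, `b = β(t)`. -/
def tiltDen {N : ℕ} (a b : ℝ) (y x : Fin N → ℝ) : ℝ :=
  Real.exp (a / b ^ 2 * dotp y x - a ^ 2 / (2 * b ^ 2) * dotp x x)

/-- Posterior mean `E[x₀ | y(t) = y]` of the tilted measure. -/
def tiltMean {N : ℕ} (P₀ : Measure (Fin N → ℝ)) (a b : ℝ) (y : Fin N → ℝ) :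
    Fin N → ℝ :=
  fun i => (∫ x, tiltDen a b y x * x i ∂P₀) / (∫ x, tiltDen a b y x ∂P₀)

/-- Covariance matrix of the tilted posterior measure `P_{t,y}`. -/
def tiltCov {N : ℕ} (P₀ : Measure (Fin N → ℝ)) (a b : ℝ) (y : Fin N → ℝ)
    (i j : Fin N) : ℝ :=
  (∫ x, tiltDen a b y x * (x i * x j) ∂P₀) / (∫ x, tiltDen a b y x ∂P₀)
    - tiltMean P₀ a b y i * tiltMean P₀ a b y j

/-- The velocity field `b(y,t) = (β̇/β) y + (α̇ − β̇α/β) E[x₀|y(t)=y]`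
(here `a = α(t)`, `b = β(t)`, `a' = α̇(t)`, `b' = β̇(t)`). -/
def velField {N : ℕ} (P₀ : Measure (Fin N → ℝ)) (a b a' b' : ℝ)
    (y : Fin N → ℝ) : Fin N → ℝ :=
  fun i => (b' / b) * y i + (a' - b' * a / b) * tiltMean P₀ a b y i

/-! Because `P₀` is concentrated on a compact set, every tilted integral
`∫ tiltDen y x * g x ∂P₀` can be differentiated in `y` under the integral sign, and the
derivative of the density brings down the factor `(α/β²) x`. Writing the posterior mean as a
quotient `M/Z` of two such integrals, the quotient rule gives its Jacobian as `α/β²` times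
`S/Z − (M/Z)(M/Z)ᵀ`, where `S = ∫ tiltDen y x • x xᵀ ∂P₀`: the posterior covariance. The
velocity field is an affine combination of `y` and the posterior mean. -/

open Metric ContinuousLinearMap

section ParametricIntegral

variable {α G : Type*} [TopologicalSpace α] [SecondCountableTopology α] [MeasurableSpace α]
  [OpensMeasurableSpace α] {μ : Measure α} [IsFiniteMeasure μ] {K : Set α}
  [NormedAddCommGroup G]

theorem Continuous.integrable_of_ae_mem_compact {f : α → G} (hf : Continuous f)
    (hK : IsCompact K) (hμK : ∀ᵐ x ∂μ, x ∈ K) : Integrable f μ := by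
  obtain ⟨C, hC⟩ := hK.exists_bound_of_continuousOn hf.continuousOn
  exact .of_bound hf.aestronglyMeasurable C (hμK.mono hC)

variable {E : Type*} [NormedAddCommGroup E] [NormedSpace ℝ E] [ProperSpace E]
  [NormedSpace ℝ G]

theorem hasFDerivAt_integral_of_continuous_of_ae_mem_compact {F : E → α → G}
    {F' : E → α → E →L[ℝ] G} (hF : Continuous (Function.uncurry F))
    (hF' : Continuous (Function.uncurry F')) (hFF' : ∀ y x, HasFDerivAt (F · x) (F' y x) y)
    (hK : IsCompact K) (hμK : ∀ᵐ x ∂μ, x ∈ K) (y₀ : E) :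
    HasFDerivAt (fun y => ∫ x, F y x ∂μ) (∫ x, F' y₀ x ∂μ) y₀ := by
  obtain ⟨C, hC⟩ := ((isCompact_closedBall y₀ 1).prod hK).exists_bound_of_continuousOn
    hF'.continuousOn
  refine hasFDerivAt_integral_of_dominated_of_fderiv_le (bound := fun _ => C)
    (closedBall_mem_nhds y₀ one_pos)
    (.of_forall fun y => (hF.comp (Continuous.prodMk_right y)).aestronglyMeasurable)
    ((hF.comp (Continuous.prodMk_right y₀)).integrable_of_ae_mem_compact hK hμK)
    (hF'.comp (Continuous.prodMk_right y₀)).aestronglyMeasurable ?_ (integrable_const C)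
    (.of_forall fun x y _ => hFF' y x)
  filter_upwards [hμK] with x hx y hy using hC (y, x) ⟨hy, hx⟩

end ParametricIntegral

section Tilt

variable {N : ℕ}

def dotpCLM : (Fin N → ℝ) →L[ℝ] (Fin N → ℝ) →L[ℝ] ℝ := ∑ j, (proj j).smulRight (proj j)

@[simp]
theorem dotpCLM_apply (w v : Fin N → ℝ) : dotpCLM w v = dotp v w := by
  simp [dotpCLM, dotp, mul_comm]

@[fun_prop]
theorem continuous_tiltDen (a b : ℝ) :
    Continuous fun p : (Fin N → ℝ) × (Fin N → ℝ) => tiltDen a b p.1 p.2 := by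
  unfold tiltDen dotp
  fun_prop

theorem hasFDerivAt_tiltDen (a b : ℝ) (x y : Fin N → ℝ) :
    HasFDerivAt (tiltDen a b · x) ((tiltDen a b y x * (a / b ^ 2)) • dotpCLM x) y := by
  have hdot : HasFDerivAt (dotp · x) (dotpCLM x) y := by
    rw [show (dotp · x) = dotpCLM x from funext fun v => (dotpCLM_apply x v).symm]
    exact (dotpCLM x).hasFDerivAt
  refine (((hdot.const_mul (a / b ^ 2)).sub_const (a ^ 2 / (2 * b ^ 2) * dotp x x)).exp
    ).congr_fderiv ?_
  rw [smul_smul]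
  rfl

variable {P₀ : Measure (Fin N → ℝ)} {K : Set (Fin N → ℝ)}

theorem integral_tiltDen_pos [IsFiniteMeasure P₀] [NeZero P₀] (hK : IsCompact K)
    (hP₀K : ∀ᵐ x ∂P₀, x ∈ K) (a b : ℝ) (y : Fin N → ℝ) : 0 < ∫ x, tiltDen a b y x ∂P₀ :=
  integral_exp_pos <|
    ((continuous_tiltDen a b).comp (Continuous.prodMk_right y)).integrable_of_ae_mem_compact
      hK hP₀K

theorem hasFDerivAt_integral_tiltDen_mul [IsFiniteMeasure P₀] (hK : IsCompact K)
    (hP₀K : ∀ᵐ x ∂P₀, x ∈ K) (a b : ℝ) {g : (Fin N → ℝ) → ℝ} (hg : Continuous g)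
    (y : Fin N → ℝ) :
    HasFDerivAt (fun y => ∫ x, tiltDen a b y x * g x ∂P₀)
      ((a / b ^ 2) • dotpCLM fun j => ∫ x, tiltDen a b y x * g x * x j ∂P₀) y := by
  have hderiv := hasFDerivAt_integral_of_continuous_of_ae_mem_compact
    (F := fun y x => tiltDen a b y x * g x)
    (F' := fun y x => dotpCLM ((a / b ^ 2 * (tiltDen a b y x * g x)) • x))
    (by fun_prop) (by fun_prop) (fun y x => ?_) hK hP₀K y
  · have hint : Integrable (fun x => (a / b ^ 2 * (tiltDen a b y x * g x)) • x) P₀ :=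
      Continuous.integrable_of_ae_mem_compact (by fun_prop) hK hP₀K
    have hcoord : (∫ x, (tiltDen a b y x * g x) • x ∂P₀)
        = fun j => ∫ x, tiltDen a b y x * g x * x j ∂P₀ :=
      funext <| eval_integral fun j =>
        Continuous.integrable_of_ae_mem_compact (by fun_prop) hK hP₀K
    rwa [integral_comp_comm dotpCLM hint, funext fun x => mul_smul (a / b ^ 2) _ x,
      integral_smul, map_smul, hcoord] at hderiv
  · refine ((hasFDerivAt_tiltDen a b x y).mul_const (g x)).congr_fderiv ?_
    rw [map_smul, smul_smul]
    congr 1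
    ring

theorem hasFDerivAt_tiltMean [IsFiniteMeasure P₀] [NeZero P₀] (hK : IsCompact K)
    (hP₀K : ∀ᵐ x ∂P₀, x ∈ K) (a b : ℝ) (y : Fin N → ℝ) (i : Fin N) :
    HasFDerivAt (tiltMean P₀ a b · i) ((a / b ^ 2) • dotpCLM (tiltCov P₀ a b y i)) y := by
  have hZ := hasFDerivAt_integral_tiltDen_mul hK hP₀K a b continuous_const (g := fun _ => 1) y
  have hM := hasFDerivAt_integral_tiltDen_mul hK hP₀K a b (continuous_apply i) y
  have hZne := (integral_tiltDen_pos hK hP₀K a b y).ne'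
  simp only [mul_one] at hZ
  simp only [mul_assoc] at hM
  refine (hM.mul ((hasDerivAt_inv hZne).comp_hasFDerivAt y hZ)).congr_fderiv ?_
  ext v
  simp only [neg_smul, smul_neg, Function.comp_apply, add_apply, neg_apply, smul_apply,
    dotpCLM_apply, dotp, smul_eq_mul, tiltCov, tiltMean]
  simp only [Finset.mul_sum, ← Finset.sum_neg_distrib, ← Finset.sum_add_distrib]
  refine Finset.sum_congr rfl fun j _ => ?_
  field_simp
  ring

theorem hasFDerivAt_velField [IsFiniteMeasure P₀] [NeZero P₀] (hK : IsCompact K)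
    (hP₀K : ∀ᵐ x ∂P₀, x ∈ K) (a b a' b' : ℝ) (y : Fin N → ℝ) :
    HasFDerivAt (velField P₀ a b a' b')
      (pi fun i => (b' / b) • proj i
        + ((a' - b' * a / b) * (a / b ^ 2)) • dotpCLM (tiltCov P₀ a b y i)) y :=
  hasFDerivAt_pi.2 fun i => ((hasFDerivAt_apply i y).const_mul (b' / b)).add
    (((hasFDerivAt_tiltMean hK hP₀K a b y i).const_mul (a' - b' * a / b)).congr_fderiv
      (smul_smul _ _ _))

end Tilt

theorem velocity_field_jacobian_general
    (N : ℕ) (P₀ : Measure (Fin N → ℝ)) [IsProbabilityMeasure P₀]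
    (hsupp : ∃ R : ℝ, P₀ {x | ‖x‖ ≤ R} = 1)
    (a b a' b' : ℝ) (y : Fin N → ℝ) :
    DifferentiableAt ℝ (velField P₀ a b a' b') y
      ∧ ∀ v : Fin N → ℝ,
          fderiv ℝ (velField P₀ a b a' b') y v
            = fun i => a / b ^ 2 * (a' - b' * a / b) * (∑ j, tiltCov P₀ a b y i j * v j)
                + (b' / b) * v i := by
  obtain ⟨R, hR⟩ := hsupp
  have hP₀K : ∀ᵐ x ∂P₀, x ∈ closedBall (0 : Fin N → ℝ) R :=
    ((ae_iff_measure_eq (isClosed_le continuous_norm continuous_const).nullMeasurableSet).2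
      (by rw [hR, measure_univ])).mono fun _ => mem_closedBall_zero_iff.2
  have hvel := hasFDerivAt_velField (isCompact_closedBall 0 R) hP₀K a b a' b' y
  refine ⟨hvel.differentiableAt, fun v => ?_⟩
  rw [hvel.fderiv]
  ext i
  simp only [coe_pi', add_apply, smul_apply, proj_apply, smul_eq_mul, dotpCLM_apply, dotp]
  simp only [mul_comm (v _)]
  ring

/-- **Fluctuation–dissipation for the velocity field.** If `P₀` has compact (bounded)
support and `β(t) > 0`, the velocity field is differentiable in `y` with Jacobian
`∂b/∂y = (α/β²)(α̇ − β̇α/β) Cov[P_{t,y}] + (β̇/β) I_N`. -/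
theorem velocity_field_jacobian
    (N : ℕ) (P₀ : Measure (Fin N → ℝ)) [IsProbabilityMeasure P₀]
    (hsupp : ∃ R : ℝ, P₀ {x | ‖x‖ ≤ R} = 1)
    (a b a' b' : ℝ) (hb : 0 < b) (y : Fin N → ℝ) :
    DifferentiableAt ℝ (velField P₀ a b a' b') y
      ∧ ∀ v : Fin N → ℝ,
          fderiv ℝ (velField P₀ a b a' b') y v
            = fun i => a / b ^ 2 * (a' - b' * a / b) * (∑ j, tiltCov P₀ a b y i j * v j)
                + (b' / b) * v i :=
  velocity_field_jacobian_general N P₀ hsupp a b a' b' y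
end
end

section
/- For the autoregressive (pinning) version of the spherical 3-spin state evolution, χ^{t+1} = θ + (1−θ) χ̃/(1+χ̃) with χ̃ = 3χ²/(2T²): the nonzero fixed-point structure changes (from unique to multiple fixed points in θ ∈ [0,1]) precisely below the tri-critical temperature T_tri = √(1/2); that is, for T > √(1/2) the fixed point equation χ = θ + (1−θ)(3χ²/(2T²))/(1 + 3χ²/(2T²)) has a unique solution χ ∈ [0,1] for every θ ∈ [0,1], while for T < √(1/2) there exists θ ∈ (0,1) for which it has at least three solutions. -/
open Real

lemma fp_iff_cubic (T θ χ : ℝ) (hT : 0 < T) :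
    (θ + (1 - θ) * ((3 * χ ^ 2 / (2 * T ^ 2)) / (1 + 3 * χ ^ 2 / (2 * T ^ 2))) = χ) ↔
    3 / (2 * T ^ 2) * χ ^ 3 - 3 / (2 * T ^ 2) * χ ^ 2 + χ = θ := by
  have hT' : T ≠ 0 := ne_of_gt hT
  have h2 : (0:ℝ) < 2 * T ^ 2 + 3 * χ ^ 2 := by positivity
  constructor <;> intro h <;> field_simp at h ⊢ <;> nlinarith [h, sq_nonneg T, h2]

lemma qmono_aux (a : ℝ) (ha : 0 < a) (ha3 : a < 3) :
    StrictMono (fun x : ℝ => a * x ^ 3 - a * x ^ 2 + x) := by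
  intro x y hxy
  simp only
  have h1 : 0 < (y - x) * (1 - a / 3) := by
    apply mul_pos (by linarith) (by linarith)
  have h2 : 0 ≤ a * (y - x) * (x + y - 2/3) ^ 2 :=
    mul_nonneg (mul_nonneg ha.le (by linarith)) (sq_nonneg _)
  have h3 : 0 ≤ a * (y - x) * (x - y) ^ 2 :=
    mul_nonneg (mul_nonneg ha.le (by linarith)) (sq_nonneg _)
  nlinarith [h1, h2, h3]

lemma unique_sol_aux (a θ : ℝ) (ha : 0 < a) (ha3 : a < 3) (hθ : θ ∈ Set.Icc (0:ℝ) 1) :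
    ∃! χ : ℝ, χ ∈ Set.Icc (0:ℝ) 1 ∧ a * χ ^ 3 - a * χ ^ 2 + χ = θ := by
  have hqc : Continuous (fun x : ℝ => a * x ^ 3 - a * x ^ 2 + x) := by continuity
  have hmem : θ ∈ Set.Icc ((fun x : ℝ => a * x ^ 3 - a * x ^ 2 + x) 0)
      ((fun x : ℝ => a * x ^ 3 - a * x ^ 2 + x) 1) := by
    simp only [Set.mem_Icc]
    constructor
    · nlinarith [hθ.1]
    · nlinarith [hθ.2]
  obtain ⟨χ, hχm, hχe⟩ := intermediate_value_Icc (by norm_num : (0:ℝ) ≤ 1)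
    hqc.continuousOn hmem
  refine ⟨χ, ⟨hχm, hχe⟩, ?_⟩
  rintro y ⟨hym, hye⟩
  exact (qmono_aux a ha ha3).injective (hye.trans hχe.symm)

lemma three_roots_aux (q : ℝ → ℝ) (hq : Continuous q) (u v θ : ℝ)
    (h0u : 0 < u) (huv : u < v) (hv1 : v < 1)
    (h1 : q 0 < θ) (h2 : θ < q u) (h3 : q v < θ) (h4 : θ < q 1) :
    ∃ χ₁ χ₂ χ₃ : ℝ, χ₁ ∈ Set.Icc (0:ℝ) 1 ∧ χ₂ ∈ Set.Icc (0:ℝ) 1 ∧ χ₃ ∈ Set.Icc (0:ℝ) 1 ∧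
      χ₁ < χ₂ ∧ χ₂ < χ₃ ∧ q χ₁ = θ ∧ q χ₂ = θ ∧ q χ₃ = θ := by
  obtain ⟨χ₁, hm1, he1⟩ := intermediate_value_Ioo h0u.le hq.continuousOn ⟨h1, h2⟩
  obtain ⟨χ₂, hm2, he2⟩ := intermediate_value_Ioo' huv.le hq.continuousOn ⟨h3, h2⟩
  obtain ⟨χ₃, hm3, he3⟩ := intermediate_value_Ioo hv1.le hq.continuousOn ⟨h3, h4⟩
  exact ⟨χ₁, χ₂, χ₃,
    ⟨hm1.1.le, hm1.2.le.trans (by linarith)⟩,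
    ⟨(h0u.trans hm2.1).le, hm2.2.le.trans hv1.le⟩,
    ⟨(by linarith [hm3.1] : (0:ℝ) ≤ χ₃), hm3.2.le⟩,
    hm1.2.trans hm2.1, hm2.2.trans hm3.1, he1, he2, he3⟩

set_option maxHeartbeats 1000000 in
lemma three_sol_aux (a : ℝ) (ha3 : 3 < a) :
    ∃ θ ∈ Set.Ioo (0:ℝ) 1, ∃ χ₁ χ₂ χ₃ : ℝ,
      χ₁ ∈ Set.Icc (0:ℝ) 1 ∧ χ₂ ∈ Set.Icc (0:ℝ) 1 ∧ χ₃ ∈ Set.Icc (0:ℝ) 1 ∧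
      χ₁ < χ₂ ∧ χ₂ < χ₃ ∧
      a * χ₁ ^ 3 - a * χ₁ ^ 2 + χ₁ = θ ∧ a * χ₂ ^ 3 - a * χ₂ ^ 2 + χ₂ = θ ∧
      a * χ₃ ^ 3 - a * χ₃ ^ 2 + χ₃ = θ := by
  have ha : 0 < a := by linarith
  classical
  let q : ℝ → ℝ := fun x => a * x ^ 3 - a * x ^ 2 + x
  have hqc : Continuous q := by fun_prop
  have hq0 : q 0 = 0 := by simp [q]
  have hq1 : q 1 = 1 := by norm_num [q]
  have hia : 1 / a < 1 / 3 := by rw [div_lt_div_iff₀ ha (by norm_num)]; linarith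
  have hiapos : 0 < 1 / a := by positivity
  obtain ⟨h, hh2, hhpos⟩ : ∃ h : ℝ, h ^ 2 = (1/3 - 1/a) / 4 ∧ 0 < h :=
    ⟨Real.sqrt ((1/3 - 1/a) / 4), Real.sq_sqrt (by linarith),
      Real.sqrt_pos.mpr (by linarith)⟩
  have hah2 : a * h ^ 2 = (a / 3 - 1) / 4 := by
    rw [hh2]; field_simp
  have hh12sq : h ^ 2 < 1 / 12 := by rw [hh2]; linarith
  have hh3 : h < 1 / 3 := by nlinarith [hh12sq, hhpos]
  have hu0 : (0:ℝ) < 1/3 - h := by linarith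
  have huv : (1:ℝ)/3 - h < 1/3 + h := by linarith
  have hv1 : (1:ℝ)/3 + h < 1 := by linarith
  have hgap : q (1/3 + h) < q (1/3 - h) := by
    have key : q (1/3 - h) - q (1/3 + h) = (3/2) * h * (a/3 - 1) := by
      simp only [q]
      linear_combination (-2 * h) * hah2
    nlinarith [mul_pos hhpos (show (0:ℝ) < a/3 - 1 by linarith)]
  have hqv1 : q (1/3 + h) < 1 := by
    simp only [q]
    nlinarith [mul_nonneg (mul_nonneg ha.le (sq_nonneg (1/3 + h)))
      (sub_nonneg.mpr hv1.le), hu0, huv]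
  by_cases hc : 0 < q (1/3 - h)
  · -- local max value positive
    have hlt : max 0 (q (1/3 + h)) < min 1 (q (1/3 - h)) :=
      lt_min (max_lt one_pos hqv1) (max_lt hc hgap)
    set θv : ℝ := (max 0 (q (1/3 + h)) + min 1 (q (1/3 - h))) / 2 with hθv
    have hM : (0:ℝ) ≤ max 0 (q (1/3 + h)) := le_max_left _ _
    have hMv : q (1/3 + h) ≤ max 0 (q (1/3 + h)) := le_max_right _ _
    have hm1' : min 1 (q (1/3 - h)) ≤ 1 := min_le_left _ _
    have hm2' : min 1 (q (1/3 - h)) ≤ q (1/3 - h) := min_le_right _ _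
    have hθ0 : 0 < θv := by rw [hθv]; linarith
    have hθ1 : θv < 1 := by rw [hθv]; linarith
    have hθu : θv < q (1/3 - h) := by rw [hθv]; linarith
    have hθw : q (1/3 + h) < θv := by rw [hθv]; linarith
    obtain ⟨χ₁, χ₂, χ₃, hm1, hm2, hm3, h12, h23, he1, he2, he3⟩ :=
      three_roots_aux q hqc (1/3 - h) (1/3 + h) θv hu0 huv hv1
        (by rw [hq0]; exact hθ0) hθu hθw (by rw [hq1]; exact hθ1)
    exact ⟨θv, ⟨hθ0, hθ1⟩, χ₁, χ₂, χ₃, hm1, hm2, hm3, h12, h23, he1, he2, he3⟩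
  · -- local max value nonpositive: use w = 1/(2a) as the left bump point
    push_neg at hc
    have hw0 : (0:ℝ) < 1 / (2 * a) := by positivity
    have hqw : 0 < q (1 / (2 * a)) := by
      have hne : a ≠ 0 := ne_of_gt ha
      have heq : q (1 / (2 * a)) = 1 / (8 * a ^ 2) + 1 / (4 * a) := by
        simp only [q]; field_simp; ring
      rw [heq]; positivity
    have hwu : 1 / (2 * a) < 1/3 - h := by
      have h36 : 36 * a ^ 2 * h ^ 2 = 3 * a * (a - 3) := by
        linear_combination (36 * a) * hah2
      have hpos : 0 < 2 * a - 3 + 6 * a * h := by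
        have := mul_pos ha hhpos; linarith
      have hfact : (2*a - 3 - 6*a*h) * (2*a - 3 + 6*a*h) = a^2 - 3*a + 9 := by
        linear_combination (-1 : ℝ) * h36
      have hfpos : 0 < a^2 - 3*a + 9 := by nlinarith [sq_nonneg (2*a - 3)]
      have key : 6 * a * h < 2 * a - 3 := by
        by_contra hk
        push_neg at hk
        have hle : (2*a - 3 - 6*a*h) * (2*a - 3 + 6*a*h) ≤ 0 :=
          mul_nonpos_iff.mpr (Or.inr ⟨by linarith, hpos.le⟩)
        rw [hfact] at hle
        linarith
      rw [div_lt_iff₀ (by positivity)]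
      nlinarith [key]
    have hminpos : 0 < min 1 (q (1 / (2 * a))) := lt_min one_pos hqw
    set θv : ℝ := min 1 (q (1 / (2 * a))) / 2 with hθv
    have hm1' : min 1 (q (1 / (2 * a))) ≤ 1 := min_le_left _ _
    have hm2' : min 1 (q (1 / (2 * a))) ≤ q (1 / (2 * a)) := min_le_right _ _
    have hθ0 : 0 < θv := by rw [hθv]; linarith
    have hθ1 : θv < 1 := by rw [hθv]; linarith
    have hθu : θv < q (1 / (2 * a)) := by rw [hθv]; linarith
    have hθw : q (1/3 - h) < θv := lt_of_le_of_lt hc hθ0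
    obtain ⟨χ₁, χ₂, χ₃, hm1, hm2, hm3, h12, h23, he1, he2, he3⟩ :=
      three_roots_aux q hqc (1 / (2 * a)) (1/3 - h) θv hw0 hwu (by linarith)
        (by rw [hq0]; exact hθ0) hθu hθw (by rw [hq1]; exact hθ1)
    exact ⟨θv, ⟨hθ0, hθ1⟩, χ₁, χ₂, χ₃, hm1, hm2, hm3, h12, h23, he1, he2, he3⟩

/-- **Tri-critical point of the pinned spherical 3-spin state evolution.** With
`F(θ,χ) = θ + (1−θ) χ̃/(1+χ̃)`, `χ̃ = 3χ²/(2T²)`: for `T > √(1/2)` the fixed-point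
equation `F(θ,χ) = χ` has a unique solution `χ ∈ [0,1]` for every `θ ∈ [0,1]`, while for
`T < √(1/2)` there exists `θ ∈ (0,1)` for which it has at least three solutions in `[0,1]`. -/
theorem pinning_spherical_pspin_tricritical (T : ℝ) (hT : 0 < T) :
    let F : ℝ → ℝ → ℝ := fun θ χ =>
      θ + (1 - θ) * ((3 * χ ^ 2 / (2 * T ^ 2)) / (1 + 3 * χ ^ 2 / (2 * T ^ 2)))
    (T > Real.sqrt (1 / 2) →
        ∀ θ ∈ Set.Icc (0 : ℝ) 1, ∃! χ : ℝ, χ ∈ Set.Icc (0 : ℝ) 1 ∧ F θ χ = χ)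
      ∧ (T < Real.sqrt (1 / 2) →
        ∃ θ ∈ Set.Ioo (0 : ℝ) 1, ∃ χ₁ χ₂ χ₃ : ℝ,
          χ₁ ∈ Set.Icc (0 : ℝ) 1 ∧ χ₂ ∈ Set.Icc (0 : ℝ) 1 ∧ χ₃ ∈ Set.Icc (0 : ℝ) 1 ∧
          χ₁ < χ₂ ∧ χ₂ < χ₃ ∧ F θ χ₁ = χ₁ ∧ F θ χ₂ = χ₂ ∧ F θ χ₃ = χ₃) := by
  intro F
  have hfp : ∀ θ χ : ℝ, F θ χ = χ ↔
      3 / (2 * T ^ 2) * χ ^ 3 - 3 / (2 * T ^ 2) * χ ^ 2 + χ = θ :=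
    fun θ χ => fp_iff_cubic T θ χ hT
  constructor
  · intro hTs θ hθ
    have hT2 : 1 / 2 < T ^ 2 := (Real.sqrt_lt' hT).mp hTs
    have ha : (0:ℝ) < 3 / (2 * T ^ 2) := by positivity
    have ha3 : 3 / (2 * T ^ 2) < 3 := by
      rw [div_lt_iff₀ (by positivity)]; nlinarith
    obtain ⟨χ, ⟨hχm, hχe⟩, huniq⟩ := unique_sol_aux (3 / (2 * T ^ 2)) θ ha ha3 hθ
    refine ⟨χ, ⟨hχm, (hfp θ χ).mpr hχe⟩, ?_⟩
    rintro y ⟨hym, hye⟩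
    exact huniq y ⟨hym, (hfp θ y).mp hye⟩
  · intro hTs
    have hT2 : T ^ 2 < 1 / 2 := by
      have := (Real.lt_sqrt hT.le).mp hTs
      linarith
    have ha3 : 3 < 3 / (2 * T ^ 2) := by
      rw [lt_div_iff₀ (by positivity)]; nlinarith
    obtain ⟨θ, hθ, χ₁, χ₂, χ₃, hm1, hm2, hm3, h12, h23, he1, he2, he3⟩ :=
      three_sol_aux (3 / (2 * T ^ 2)) ha3
    exact ⟨θ, hθ, χ₁, χ₂, χ₃, hm1, hm2, hm3, h12, h23,
      (hfp θ χ₁).mpr he1, (hfp θ χ₂).mpr he2, (hfp θ χ₃).mpr he3⟩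
end
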